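/- Let (τ_1,...,τ_r) be a minimal transitive star factorization of π ∈ S_n and let σ = (1 b_2 ... b_ℓ) be the cycle of π containing 1. Then each transposition (1 b_i), 2 ≤ i ≤ ℓ, appears exactly once among τ_1,...,τ_r, and these factors appear in right-to-left order (1 b_2), (1 b_3), ..., (1 b_ℓ) (i.e., reading the factorization from right to left one encounters (1 b_2) first, then (1 b_3), etc.). -/

import Mathlib

def IsStarList {n : ℕ} [NeZero n] (l : List (Equiv.Perm (Fin n))) : Prop :=
  ∀ τ ∈ l, ∃ i : Fin n, i ≠ 0 ∧ τ = Equiv.swap 0 i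

def IsStarFactorization {n : ℕ} [NeZero n] (π : Equiv.Perm (Fin n))
    (l : List (Equiv.Perm (Fin n))) : Prop :=
  IsStarList l ∧ l.prod = π

def IsTransitiveList {n : ℕ} (l : List (Equiv.Perm (Fin n))) : Prop :=
  ∀ x y : Fin n, ∃ g ∈ Subgroup.closure {τ | τ ∈ l}, g x = y

/-- Number of cycles of `π`, counting fixed points as cycles. -/
def numCycles {n : ℕ} (π : Equiv.Perm (Fin n)) : ℕ :=
  π.cycleType.card + (Finset.univ.filter fun x => π x = x).card

/-- A minimal transitive star factorization: transitive of length `n + m - 2`. -/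
def IsMinimalTransitiveStarFactorization {n : ℕ} [NeZero n] (π : Equiv.Perm (Fin n))
    (l : List (Equiv.Perm (Fin n))) : Prop :=
  IsStarFactorization π l ∧ IsTransitiveList l ∧ l.length = n + numCycles π - 2

/-!
Transitivity forces every `(0 a)`, `a ≠ 0`, to occur. In each cycle `C` of `π` avoiding `0` some
`(0 a)`, `a ∈ C`, occurs twice: otherwise the leftmost factor touching `C` sends a point of `C`,
fixed by all factors to its right, to `0 ∉ C`. Counting factors cycle by cycle, the length is at
least `(n - 1) + (m - 1)` plus the surplus on the cycle of `0`, so minimality makes every `(0 bᵢ)`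
occur exactly once. Then if `(0 x)` stands at position `p`, the factors right of `p` fix `x`, so
those left of `p` send `0` to `π x`; were `(0 (π x))` right of `p`, they would also fix `π x`.
-/

open Equiv Finset

theorem Equiv.Perm.apply_eq_self_of_mem_closure {α : Type*} {s : Set (Perm α)} {a : α}
    (hs : ∀ τ ∈ s, τ a = a) {g : Perm α} (hg : g ∈ Subgroup.closure s) : g a = a :=
  (Subgroup.closure_le (MulAction.stabilizer (Perm α) a)).mpr hs hg

section SwapList

variable {α : Type*} [DecidableEq α] {r : α} {l : List (Perm α)}

theorem apply_eq_self_of_swap_notMem (hl : ∀ τ ∈ l, ∃ i, τ = swap r i) {a : α}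
    (ha : a ≠ r) (h : swap r a ∉ l) : ∀ τ ∈ l, τ a = a := by
  intro τ hτ
  obtain ⟨i, rfl⟩ := hl τ hτ
  exact swap_apply_of_ne_of_ne ha (by rintro rfl; exact h hτ)

theorem prod_apply_eq_self_of_swap_notMem (hl : ∀ τ ∈ l, ∃ i, τ = swap r i) {a : α}
    (ha : a ≠ r) (h : swap r a ∉ l) : l.prod a = a :=
  Perm.apply_eq_self_of_mem_closure (apply_eq_self_of_swap_notMem hl ha h)
    (Subgroup.list_prod_mem _ fun _ hτ => Subgroup.subset_closure hτ)

variable [Fintype α]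

theorem sum_count_swap_eq_length (hl : ∀ τ ∈ l, ∃ i, τ = swap r i) :
    ∑ a, l.count (swap r a) = l.length := by
  have hinj : Set.InjOn (swap r) (univ : Finset α) := fun a _ b _ h => by
    simpa using congr($h r)
  rw [← Finset.sum_image (f := fun τ => l.count τ) hinj]
  simp only [← Multiset.coe_count]
  rw [Multiset.sum_count_eq_card]
  · rfl
  · intro τ hτ
    obtain ⟨i, rfl⟩ := hl τ hτ
    exact mem_image_of_mem _ (mem_univ i)

theorem eq_empty_of_forall_count_swap_eq_one (hl : ∀ τ ∈ l, ∃ i, τ = swap r i)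
    {S : Finset α} (hr : r ∉ S) (hS : ∀ x ∈ S, l.prod x ∈ S)
    (hc : ∀ x ∈ S, l.count (swap r x) = 1) : S = ∅ := by
  induction l with
  | nil => exact eq_empty_of_forall_notMem fun x hx => by simpa using hc x hx
  | cons τ t ih =>
    obtain ⟨a, rfl⟩ := hl τ List.mem_cons_self
    have ht : ∀ τ ∈ t, ∃ i, τ = swap r i := fun τ hτ => hl τ (List.mem_cons_of_mem _ hτ)
    by_cases ha : a ∈ S
    · have hat : swap r a ∉ t := List.count_eq_zero.mp (by simpa using hc a ha)
      have hmaps := hS a ha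
      rw [List.prod_cons, Perm.mul_apply, prod_apply_eq_self_of_swap_notMem ht
        (ne_of_mem_of_not_mem ha hr) hat, swap_apply_right] at hmaps
      exact absurd hmaps hr
    · have hfix : ∀ v ∈ S, swap r a v = v := fun v hv =>
        swap_apply_of_ne_of_ne (ne_of_mem_of_not_mem hv hr) (ne_of_mem_of_not_mem hv ha)
      refine ih ht (fun x hx => ?_) (fun x hx => ?_)
      · have hmaps := hS x hx
        rw [List.prod_cons, Perm.mul_apply] at hmaps
        rwa [← swap_apply_self r a (t.prod x), hfix _ hmaps]
      · have hne : swap r a ≠ swap r x := fun h => by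
          rw [show a = x by simpa using congr($h r)] at ha
          exact ha hx
        rw [← List.count_cons_of_ne hne]
        exact hc x hx

theorem lt_of_get_eq_swap_of_prod_apply_eq (hl : ∀ τ ∈ l, ∃ i, τ = swap r i) {x y : α}
    (hx : x ≠ r) (hy : y ≠ r) (hxy : x ≠ y) (hcx : l.count (swap r x) ≤ 1)
    (hcy : l.count (swap r y) ≤ 1) (h : l.prod x = y) (p q : Fin l.length)
    (hp : l.get p = swap r x) (hq : l.get q = swap r y) : q < p := by
  set A := l.take p
  set B := l.drop (p + 1)
  have hsplit : l = A ++ swap r x :: B := by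
    rw [← hp, List.get_eq_getElem, List.getElem_cons_drop, List.take_append_drop]
  have hcount : ∀ τ, l.count τ = A.count τ + (swap r x :: B).count τ := fun τ => by
    conv_lhs => rw [hsplit]
    exact List.count_append
  have hxB : swap r x ∉ B := by
    intro hB
    have hsum := hcount (swap r x)
    rw [List.count_cons_self] at hsum
    have := List.count_pos_iff.mpr hB
    omega
  have hA : A.prod r = y := by
    rw [← h, hsplit, List.prod_append, List.prod_cons, Perm.mul_apply, Perm.mul_apply,
      prod_apply_eq_self_of_swap_notMem (fun τ hτ => hl τ (List.mem_of_mem_drop hτ)) hx hxB,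
      swap_apply_right]
  by_contra hqp
  have hpq : p ≠ q := by
    rintro rfl
    exact hxy (by simpa using congr($(hp.symm.trans hq) r))
  have hyB : swap r y ∈ B := by
    rw [← hq, List.mem_drop_iff_getElem]
    exact ⟨q - (p + 1), by omega, by simp only [List.get_eq_getElem]; congr 1; omega⟩
  have hyA : swap r y ∉ A := by
    intro hA'
    have := hcount (swap r y)
    have := List.count_pos_iff.mpr hA'
    have := List.count_pos_iff.mpr hyB
    have := List.count_le_count_cons (a := swap r y) (b := swap r x) (l := B)
    omega
  have hAy := prod_apply_eq_self_of_swap_notMem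
    (fun τ hτ => hl τ (List.mem_of_mem_take hτ)) hy hyA
  exact hy (A.prod.injective (hAy.trans hA.symm))

end SwapList

section CycleLabel

variable {α : Type*} [Fintype α] [DecidableEq α] {σ : Perm α}

/-- Two points get the same label iff they lie in the same cycle, so the labels count the cycles
of `σ`, fixed points included. -/
def Equiv.Perm.cycleLabel (σ : Perm α) (x : α) : Perm α ⊕ α :=
  if σ x = x then .inr x else .inl (σ.cycleOf x)

theorem Equiv.Perm.SameCycle.cycleLabel_eq {x y : α} (h : σ.SameCycle x y) :
    σ.cycleLabel x = σ.cycleLabel y := by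
  by_cases hx : σ x = x
  · rw [h.eq_of_left hx]
  · rw [Perm.cycleLabel, Perm.cycleLabel, if_neg hx, if_neg (h.apply_eq_self_iff.not.mp hx),
      h.cycleOf_eq]

theorem Equiv.Perm.image_cycleLabel :
    univ.image σ.cycleLabel = σ.cycleFactorsFinset.disjSum {x | σ x = x} := by
  ext (c | y)
  · simp only [mem_image, mem_univ, true_and, inl_mem_disjSum, Perm.cycleLabel]
    constructor
    · rintro ⟨x, hx⟩
      split_ifs at hx with h
      cases hx
      exact Perm.cycleOf_mem_cycleFactorsFinset_iff.mpr (Perm.mem_support.mpr h)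
    · intro hc
      obtain ⟨x, hx⟩ := (Perm.mem_cycleFactorsFinset_iff.mp hc).1.nonempty_support
      refine ⟨x, ?_⟩
      rw [if_neg (Perm.mem_support.mp (Perm.mem_cycleFactorsFinset_support_le hc hx)),
        ← Perm.cycle_is_cycleOf hx hc]
  · simp only [mem_image, mem_univ, true_and, inr_mem_disjSum, mem_filter, Perm.cycleLabel]
    constructor
    · rintro ⟨x, hx⟩
      split_ifs at hx with h
      cases hx
      exact h
    · intro hy
      exact ⟨y, if_pos hy⟩

theorem Equiv.Perm.card_image_cycleLabel :
    #(univ.image σ.cycleLabel) = σ.cycleType.card + #{x | σ x = x} := by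
  rw [Perm.image_cycleLabel, card_disjSum, Perm.cycleType_def, Multiset.card_map]
  rfl

theorem Equiv.Perm.card_cycles_sub_one_add_le_sum {d : α → ℕ} {x₀ x : α}
    (hx : σ.SameCycle x₀ x)
    (hd : ∀ S : Finset α, S.Nonempty → x₀ ∉ S → (∀ a ∈ S, σ a ∈ S) → ∃ a ∈ S, d a ≠ 0) :
    σ.cycleType.card + #{y | σ y = y} - 1 + d x ≤ ∑ a, d a := by
  set T := univ.image σ.cycleLabel
  set fiber : Perm α ⊕ α → Finset α := fun t => {a | σ.cycleLabel a = t}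
  have hx₀ : σ.cycleLabel x₀ ∈ T := mem_image_of_mem _ (mem_univ _)
  have hother : ∀ t ∈ T.erase (σ.cycleLabel x₀), 1 ≤ ∑ a ∈ fiber t, d a := by
    intro t ht
    obtain ⟨hne, ht⟩ := mem_erase.mp ht
    obtain ⟨y, -, rfl⟩ := mem_image.mp ht
    obtain ⟨a, ha, hda⟩ := hd (fiber (σ.cycleLabel y)) ⟨y, by simp [fiber]⟩
      (by simpa [fiber] using hne.symm)
      (fun a ha => by
        simpa [fiber, ← (Perm.SameCycle.refl σ a).apply_right.cycleLabel_eq] using ha)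
    exact (Nat.one_le_iff_ne_zero.mpr hda).trans (single_le_sum (fun _ _ => Nat.zero_le _) ha)
  have hown : d x ≤ ∑ a ∈ fiber (σ.cycleLabel x₀), d a :=
    single_le_sum (fun _ _ => Nat.zero_le _) (by simp [fiber, hx.cycleLabel_eq])
  calc σ.cycleType.card + #{y | σ y = y} - 1 + d x
      = ∑ t ∈ T.erase (σ.cycleLabel x₀), 1 + d x := by
        rw [← card_eq_sum_ones, card_erase_of_mem hx₀, Perm.card_image_cycleLabel]
    _ ≤ ∑ t ∈ T.erase (σ.cycleLabel x₀), ∑ a ∈ fiber t, d a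
          + ∑ a ∈ fiber (σ.cycleLabel x₀), d a := add_le_add (sum_le_sum hother) hown
    _ = ∑ t ∈ T, ∑ a ∈ fiber t, d a := sum_erase_add _ _ hx₀
    _ = ∑ a, d a := sum_fiberwise_of_maps_to (fun a _ => mem_image_of_mem _ (mem_univ a)) d

end CycleLabel

section StarFactorization

variable {n : ℕ} [NeZero n] {π : Perm (Fin n)} {l : List (Perm (Fin n))}

theorem IsStarList.exists_eq_swap (hl : IsStarList l) : ∀ τ ∈ l, ∃ i, τ = swap 0 i :=
  fun τ hτ => (hl τ hτ).imp fun _ => And.right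

theorem IsStarList.count_swap_zero (hl : IsStarList l) : l.count (swap 0 0) = 0 :=
  List.count_eq_zero.mpr fun h => by
    obtain ⟨i, hi, he⟩ := hl _ h
    exact hi (by simpa using congr($he 0).symm)

theorem IsTransitiveList.swap_mem (htrans : IsTransitiveList l) (hstar : IsStarList l)
    {a : Fin n} (ha : a ≠ 0) : swap 0 a ∈ l := by
  by_contra h
  obtain ⟨g, hg, hga⟩ := htrans 0 a
  have hfix := Perm.apply_eq_self_of_mem_closure
    (apply_eq_self_of_swap_notMem hstar.exists_eq_swap ha h) hg
  exact ha (g.injective (hga.trans hfix.symm)).symm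

theorem IsMinimalTransitiveStarFactorization.count_swap_eq_one
    (hl : IsMinimalTransitiveStarFactorization π l) {x : Fin n} (hx : π.SameCycle 0 x)
    (hx0 : x ≠ 0) : l.count (swap 0 x) = 1 := by
  obtain ⟨⟨hstar, rfl⟩, htrans, hlen⟩ := hl
  set c : Fin n → ℕ := fun a => l.count (swap 0 a)
  have hpos : ∀ a, a ≠ 0 → 1 ≤ c a := fun a ha =>
    List.count_pos_iff.mpr (htrans.swap_mem hstar ha)
  have hsum : ∑ a, (c a - 1) + (n - 1) = l.length := by
    have herase : #(univ.erase (0 : Fin n)) = n - 1 := by simp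
    have hc0 : c 0 = 0 := hstar.count_swap_zero
    rw [← sum_count_swap_eq_length hstar.exists_eq_swap, ← add_sum_erase _ _ (mem_univ 0),
      ← add_sum_erase _ c (mem_univ 0), hc0, ← herase, card_eq_sum_ones,
      add_assoc, ← sum_add_distrib]
    exact congrArg _ (sum_congr rfl fun a ha => Nat.sub_add_cancel (hpos a (ne_of_mem_erase ha)))
  have hle := Perm.card_cycles_sub_one_add_le_sum (d := fun a => c a - 1) hx
    fun S hS h0 hinv => by
      by_contra! hall
      refine hS.ne_empty (eq_empty_of_forall_count_swap_eq_one hstar.exists_eq_swap h0 hinv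
        fun a ha => ?_)
      show c a = 1
      have := hpos a (ne_of_mem_of_not_mem ha h0)
      have := hall a ha
      omega
  show c x = 1
  have := hpos x hx0
  unfold numCycles at hlen
  omega

theorem IsMinimalTransitiveStarFactorization.lt_of_get_eq_swap_apply
    (hl : IsMinimalTransitiveStarFactorization π l) {x : Fin n} (hx : π.SameCycle 0 x)
    (hx0 : x ≠ 0) (hπx : π x ≠ 0) (p q : Fin l.length) (hp : l.get p = swap 0 x)
    (hq : l.get q = swap 0 (π x)) : q < p :=
  lt_of_get_eq_swap_of_prod_apply_eq hl.1.1.exists_eq_swap hx0 hπx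
    (fun h => hx0 (hx.symm.eq_of_left h.symm))
    (hl.count_swap_eq_one hx hx0).le
    (hl.count_swap_eq_one (Perm.sameCycle_apply_right.mpr hx) hπx).le
    (by rw [hl.1.2]) p q hp hq

end StarFactorization

/-- The symbol `1` is encoded as `0 : Fin n`, and `b i` is the paper's `b_{i+1}`. -/
theorem stmt6_general {n : ℕ} [NeZero n] (π : Equiv.Perm (Fin n))
    (l : List (Equiv.Perm (Fin n)))
    (hl : IsMinimalTransitiveStarFactorization π l)
    (ℓ : ℕ) (hℓ : 1 ≤ ℓ) (b : ℕ → Fin n) (hb0 : b 0 = 0)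
    (hinj : ∀ i j, i < ℓ → j < ℓ → b i = b j → i = j)
    (hcyc : ∀ i, i + 1 < ℓ → π (b i) = b (i + 1))
    (horb : ∀ x : Fin n, π.SameCycle 0 x ↔ ∃ i < ℓ, x = b i) :
    (∀ i, 1 ≤ i → i < ℓ → l.count (Equiv.swap 0 (b i)) = 1) ∧
    (∀ i j, 1 ≤ i → i < j → j < ℓ → ∀ p q : Fin l.length,
      l.get p = Equiv.swap 0 (b i) → l.get q = Equiv.swap 0 (b j) → q < p) := by
  have hb : ∀ i, 1 ≤ i → i < ℓ → b i ≠ 0 := fun i h1 h2 h => by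
    have := hinj i 0 h2 hℓ (h.trans hb0.symm)
    omega
  have hsame : ∀ i < ℓ, π.SameCycle 0 (b i) := fun i hi => (horb _).mpr ⟨i, hi, rfl⟩
  have hcount : ∀ i, 1 ≤ i → i < ℓ → l.count (swap 0 (b i)) = 1 := fun i h1 h2 =>
    hl.count_swap_eq_one (hsame i h2) (hb i h1 h2)
  have hstep : ∀ k, 1 ≤ k → k + 1 < ℓ → ∀ p q : Fin l.length, l.get p = swap 0 (b k) →
      l.get q = swap 0 (b (k + 1)) → q < p := fun k h1 h2 p q hp hq =>
    hl.lt_of_get_eq_swap_apply (hsame k (by omega)) (hb k h1 (by omega))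
      (hcyc k h2 ▸ hb (k + 1) (by omega) h2) p q hp (hcyc k h2 ▸ hq)
  refine ⟨hcount, fun i j h1 hij hj => ?_⟩
  induction j, hij using Nat.le_induction with
  | base => exact hstep i h1 hj
  | succ j hij ih =>
    intro p q hp hq
    obtain ⟨s, hs⟩ := List.mem_iff_get.mp
      (List.count_pos_iff.mp (by rw [hcount j (by omega) (by omega)]; exact one_pos))
    exact (hstep j (by omega) hj s q hs hq).trans (ih (by omega) p s hp hs)

/-- Lemma 1(2): the cycle `(1 b₂ ⋯ b_ℓ)` of `π` containing the symbol 1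
(encoded as `0 : Fin n`, with `b i = b_{i+1}` and `b 0 = 0`): each factor
`(1 bᵢ)` appears exactly once and the factors appear in right-to-left order
`(1 b₂), (1 b₃), …, (1 b_ℓ)`. -/
theorem stmt6 {n : ℕ} [NeZero n] (π : Equiv.Perm (Fin n))
    (l : List (Equiv.Perm (Fin n)))
    (hl : IsMinimalTransitiveStarFactorization π l)
    (ℓ : ℕ) (hℓ : 1 ≤ ℓ) (b : ℕ → Fin n) (hb0 : b 0 = 0)
    (hinj : ∀ i j, i < ℓ → j < ℓ → b i = b j → i = j)
    (hcyc : ∀ i, i + 1 < ℓ → π (b i) = b (i + 1))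
    (hlast : π (b (ℓ - 1)) = b 0)
    (horb : ∀ x : Fin n, π.SameCycle 0 x ↔ ∃ i < ℓ, x = b i) :
    (∀ i, 1 ≤ i → i < ℓ → l.count (Equiv.swap 0 (b i)) = 1) ∧
    (∀ i j, 1 ≤ i → i < j → j < ℓ → ∀ p q : Fin l.length,
      l.get p = Equiv.swap 0 (b i) → l.get q = Equiv.swap 0 (b j) → q < p) :=
  stmt6_general π l hl ℓ hℓ b hb0 hinj hcyc horb
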